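/- arXiv:cs/0506025 — 2 statements merged into one kernel-verified Lean document; each statement's English description precedes it below -/
import Mathlib

section
/- Let n ≥ 1 and m be natural numbers, let k ≥ 1 be a real number, and let b : Fin m → ℕ assign to each of m messages the length of its codeword in the code-tree current when that message is processed. Then ∑_{i} (if b i ≤ ⌈(log₂ n)/k⌉ then b i + 1 else ⌈log₂ n⌉ + 1) ≤ k·(∑_{i} b i) + 2·m. (This is the total-client-cost bound of Theorem 1: if a dynamic instantaneous compression algorithm encodes the message sequence in B = ∑ b i bits, the clients together send at most k·B + 2·m bits.) -/
/-- Total client-cost bound of Theorem 1: summing the per-message cost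
over all `m` messages gives at most `k * B + 2 * m`, where
`B = ∑ i, b i` is the length of the compressed encoding. -/
theorem stmt_4 (n : ℕ) (hn : 1 ≤ n) (m : ℕ) (k : ℝ) (hk : 1 ≤ k)
    (b : Fin m → ℕ) :
    ((∑ i : Fin m, (if (b i : ℤ) ≤ ⌈Real.logb 2 n / k⌉ then b i + 1
        else ⌈Real.logb 2 n⌉.toNat + 1 : ℕ)) : ℝ)
      ≤ k * (∑ i : Fin m, (b i : ℝ)) + 2 * m := by
  have hk0 : (0:ℝ) < k := lt_of_lt_of_le one_pos hk
  have key : ∀ i : Fin m,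
      ((if (b i : ℤ) ≤ ⌈Real.logb 2 n / k⌉ then b i + 1
        else ⌈Real.logb 2 n⌉.toNat + 1 : ℕ) : ℝ) ≤ k * b i + 2 := by
    intro i
    by_cases h : (b i : ℤ) ≤ ⌈Real.logb 2 n / k⌉
    · simp only [h, if_true]
      push_cast
      nlinarith [Nat.cast_nonneg (α := ℝ) (b i)]
    · simp only [h, if_false]
      push_cast
      push_neg at h
      have hb : Real.logb 2 n / k < (b i : ℝ) := by
        have h1 : Real.logb 2 n / k ≤ (⌈Real.logb 2 n / k⌉ : ℝ) := Int.le_ceil _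
        have h2 : ((⌈Real.logb 2 n / k⌉ : ℤ) : ℝ) < ((b i : ℤ) : ℝ) := by
          exact_mod_cast h
        push_cast at h2
        linarith
      have hlog : Real.logb 2 n < k * b i := by
        have := (div_lt_iff₀ hk0).mp hb
        linarith
      have hceil : ((⌈Real.logb 2 n⌉.toNat : ℤ) : ℝ) ≤ k * b i + 1 := by
        rcases le_or_gt (⌈Real.logb 2 n⌉) 0 with h0 | h0
        · have : ⌈Real.logb 2 n⌉.toNat = 0 := Int.toNat_of_nonpos h0
          rw [this]
          have : (0:ℝ) ≤ k * b i := by positivity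
          push_cast
          linarith
        · have : (⌈Real.logb 2 n⌉.toNat : ℤ) = ⌈Real.logb 2 n⌉ :=
            Int.toNat_of_nonneg h0.le
          rw [this]
          have := Int.ceil_lt_add_one (Real.logb 2 n)
          push_cast at this ⊢
          linarith
      push_cast at hceil
      linarith
  calc ((∑ i : Fin m, (if (b i : ℤ) ≤ ⌈Real.logb 2 n / k⌉ then b i + 1
        else ⌈Real.logb 2 n⌉.toNat + 1 : ℕ)) : ℝ)
      = ∑ i : Fin m, ((if (b i : ℤ) ≤ ⌈Real.logb 2 n / k⌉ then b i + 1
        else ⌈Real.logb 2 n⌉.toNat + 1 : ℕ) : ℝ) := by push_cast; ring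
    _ ≤ ∑ i : Fin m, (k * b i + 2) := Finset.sum_le_sum (fun i _ => key i)
    _ = k * (∑ i : Fin m, (b i : ℝ)) + 2 * m := by
        rw [Finset.sum_add_distrib, ← Finset.mul_sum]
        simp [mul_comm]
end

section
/- Let α be a finite type of cardinality N ≥ 1 and let f : α → List Bool be an injective function into binary strings. Then ∑_{x : α} (f x).length ≥ N·(log₂ N − 2). (This is the counting argument used in the lower bound: any injective binary encoding of N objects has average length at least log₂ N − 2 bits.) -/
/-- Encode a binary string as a natural number (prepend a leading 1 bit). -/
def binEnc : List Bool → ℕ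
  | [] => 1
  | b :: s => 2 * binEnc s + (if b then 1 else 0)

lemma binEnc_pos (s : List Bool) : 1 ≤ binEnc s := by
  induction s with
  | nil => simp [binEnc]
  | cons b s ih => cases b <;> simp [binEnc] <;> omega

lemma binEnc_injective : Function.Injective binEnc := by
  intro s t h
  induction s generalizing t with
  | nil =>
    cases t with
    | nil => rfl
    | cons c t =>
      exfalso
      have := binEnc_pos t
      cases c <;> simp [binEnc] at h <;> omega
  | cons b s ih =>
    cases t with
    | nil =>
      exfalso
      have := binEnc_pos s
      cases b <;> simp [binEnc] at h <;> omega
    | cons c t =>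
      cases b <;> cases c <;> simp [binEnc] at h
      · rw [ih h]
      · exfalso; omega
      · exfalso; omega
      · rw [ih h]

lemma binEnc_le_pow (s : List Bool) : binEnc s ≤ 2 ^ (s.length + 1) - 1 := by
  induction s with
  | nil => simp [binEnc]
  | cons b s ih =>
    have h1 : (1:ℕ) ≤ 2 ^ (s.length + 1) := Nat.one_le_two_pow
    simp only [binEnc, List.length_cons]
    rw [show s.length + 1 + 1 = (s.length + 1) + 1 from rfl, pow_succ]
    cases b <;> simp <;> omega

/-- Counting argument: any injective binary encoding of `N` objects has
total length at least `N * (log₂ N − 2)`. -/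
theorem stmt_5 (α : Type*) [Fintype α] (N : ℕ) (hN : Fintype.card α = N)
    (hN1 : 1 ≤ N) (f : α → List Bool) (hf : Function.Injective f) :
    ((N : ℝ) * (Real.logb 2 N - 2)) ≤ (∑ x : α, ((f x).length : ℝ)) := by
  classical
  set k := Nat.log 2 N with hk
  have hk1 : 2 ^ k ≤ N := Nat.pow_log_le_self 2 (by omega)
  have hk2 : N < 2 ^ (k + 1) := Nat.lt_pow_succ_log_self (by norm_num) N
  -- cardinality bound: at most 2^(j+1)-1 elements have encoding length ≤ j
  have hcard : ∀ j : ℕ,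
      (Finset.univ.filter (fun x : α => (f x).length ≤ j)).card ≤ 2 ^ (j + 1) - 1 := by
    intro j
    have hmaps : ∀ x ∈ Finset.univ.filter (fun x : α => (f x).length ≤ j),
        binEnc (f x) ∈ Finset.Ico 1 (2 ^ (j + 1)) := by
      intro x hx
      rw [Finset.mem_filter] at hx
      rw [Finset.mem_Ico]
      refine ⟨binEnc_pos _, ?_⟩
      have h1 := binEnc_le_pow (f x)
      have h2 : 2 ^ ((f x).length + 1) ≤ 2 ^ (j + 1) :=
        Nat.pow_le_pow_right (by norm_num) (by omega)
      have h3 : (1:ℕ) ≤ 2 ^ ((f x).length + 1) := Nat.one_le_two_pow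
      omega
    have hinj : ∀ x ∈ Finset.univ.filter (fun x : α => (f x).length ≤ j),
        ∀ y ∈ Finset.univ.filter (fun x : α => (f x).length ≤ j),
        binEnc (f x) = binEnc (f y) → x = y := by
      intro x _ y _ hxy
      exact hf (binEnc_injective hxy)
    have := Finset.card_le_card_of_injOn (fun x => binEnc (f x)) hmaps hinj
    simpa [Nat.card_Ico] using this
  -- hence at least N + 1 - 2^(j+1) elements have length > j
  have hbig : ∀ j : ℕ, (N : ℤ) + 1 - 2 ^ (j + 1) ≤
      ((Finset.univ.filter (fun x : α => j < (f x).length)).card : ℤ) := by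
    intro j
    have h1 := hcard j
    have h1' : ((Finset.univ.filter (fun x : α => (f x).length ≤ j)).card : ℤ)
        ≤ 2 ^ (j + 1) - 1 := by
      have hp : (1:ℕ) ≤ 2 ^ (j + 1) := Nat.one_le_two_pow
      calc ((Finset.univ.filter (fun x : α => (f x).length ≤ j)).card : ℤ)
          ≤ ((2 ^ (j + 1) - 1 : ℕ) : ℤ) := by exact_mod_cast h1
        _ = 2 ^ (j + 1) - 1 := by rw [Nat.cast_sub hp]; push_cast; ring
    have h2 : (Finset.univ.filter (fun x : α => j < (f x).length)).card
        + (Finset.univ.filter (fun x : α => ¬ j < (f x).length)).card = N := by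
      rw [Finset.card_filter_add_card_filter_not, Finset.card_univ, hN]
    have hfe : (Finset.univ.filter (fun x : α => ¬ j < (f x).length))
        = Finset.univ.filter (fun x : α => (f x).length ≤ j) := by
      simp [not_lt]
    rw [hfe] at h2
    have h2' : ((Finset.univ.filter (fun x : α => j < (f x).length)).card : ℤ)
        + ((Finset.univ.filter (fun x : α => (f x).length ≤ j)).card : ℤ) = (N : ℤ) := by
      exact_mod_cast h2
    linarith
  -- summing over j < k
  have hS : (k : ℤ) * (N + 1) - (2 ^ (k + 1) - 2) ≤ ∑ x : α, ((f x).length : ℤ) := by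
    have step1 : ∑ j ∈ Finset.range k, ((N : ℤ) + 1 - 2 ^ (j + 1))
        ≤ ∑ j ∈ Finset.range k,
            ((Finset.univ.filter (fun x : α => j < (f x).length)).card : ℤ) :=
      Finset.sum_le_sum fun j _ => hbig j
    have step2 : ∑ j ∈ Finset.range k,
        ((Finset.univ.filter (fun x : α => j < (f x).length)).card : ℤ)
        ≤ ∑ x : α, ((f x).length : ℤ) := by
      have hrw : ∀ j : ℕ,
          ((Finset.univ.filter (fun x : α => j < (f x).length)).card : ℤ)
          = ∑ x : α, (if j < (f x).length then (1:ℤ) else 0) := by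
        intro j
        rw [Finset.card_filter]
        push_cast
        rfl
      calc ∑ j ∈ Finset.range k,
            ((Finset.univ.filter (fun x : α => j < (f x).length)).card : ℤ)
          = ∑ j ∈ Finset.range k, ∑ x : α, (if j < (f x).length then (1:ℤ) else 0) := by
            exact Finset.sum_congr rfl fun j _ => hrw j
        _ = ∑ x : α, ∑ j ∈ Finset.range k, (if j < (f x).length then (1:ℤ) else 0) :=
            Finset.sum_comm
        _ ≤ ∑ x : α, ((f x).length : ℤ) := by
            refine Finset.sum_le_sum fun x _ => ?_
            rw [Finset.sum_boole]
            have hsub : (Finset.range k).filter (fun j => j < (f x).length)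
                ⊆ Finset.range (f x).length := by
              intro j hj
              rw [Finset.mem_filter] at hj
              exact Finset.mem_range.mpr hj.2
            have := Finset.card_le_card hsub
            rw [Finset.card_range] at this
            exact_mod_cast this
    have hgeom : ∑ j ∈ Finset.range k, ((N : ℤ) + 1 - 2 ^ (j + 1))
        = (k : ℤ) * (N + 1) - (2 ^ (k + 1) - 2) := by
      have hg : ∑ j ∈ Finset.range k, (2:ℤ) ^ j = 2 ^ k - 1 := by
        have := geom_sum_mul (2:ℤ) k
        simpa using this
      have : ∑ j ∈ Finset.range k, (2:ℤ) ^ (j + 1)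
          = 2 * ∑ j ∈ Finset.range k, (2:ℤ) ^ j := by
        rw [Finset.mul_sum]
        exact Finset.sum_congr rfl fun j _ => by ring
      rw [Finset.sum_sub_distrib, Finset.sum_const, Finset.card_range, this, hg]
      ring
    linarith [hgeom ▸ step1, step2]
  -- real part
  have hN0 : (0:ℝ) < N := by exact_mod_cast hN1
  set L := Real.logb 2 (N : ℝ) with hL
  have hLk : (k : ℝ) ≤ L := by
    have h1 : ((2:ℝ) ^ k) ≤ (N : ℝ) := by exact_mod_cast hk1
    have h2 : Real.logb 2 ((2:ℝ) ^ k) ≤ L :=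
      Real.logb_le_logb_of_le (by norm_num) (by positivity) h1
    rwa [Real.logb_pow, Real.logb_self_eq_one (by norm_num), mul_one] at h2
  have hLk1 : L ≤ (k : ℝ) + 1 := by
    have h1 : (N : ℝ) ≤ (2:ℝ) ^ (k + 1) := by exact_mod_cast hk2.le
    have h2 : L ≤ Real.logb 2 ((2:ℝ) ^ (k + 1)) :=
      Real.logb_le_logb_of_le (by norm_num) hN0 h1
    have h3 : Real.logb 2 ((2:ℝ) ^ (k + 1)) = (k : ℝ) + 1 := by
      rw [Real.logb_pow, Real.logb_self_eq_one (by norm_num), mul_one]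
      push_cast; ring
    linarith [h3 ▸ h2]
  set v := (k : ℝ) + 1 - L with hv
  have hv0 : 0 ≤ v := by simp only [hv]; linarith
  have hv1 : v ≤ 1 := by simp only [hv]; linarith
  have h2v : (2:ℝ) ^ v ≤ 1 + v := by
    have hcx := convexOn_exp.2 (Set.mem_univ (0:ℝ)) (Set.mem_univ (Real.log 2))
      (by linarith : (0:ℝ) ≤ 1 - v) hv0 (by ring)
    simp only [smul_eq_mul, mul_zero, zero_add, Real.exp_zero, mul_one,
      Real.exp_log (by norm_num : (0:ℝ) < 2)] at hcx
    rw [Real.rpow_def_of_pos (by norm_num), mul_comm]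
    linarith
  have hNL : (2:ℝ) ^ L = (N : ℝ) := Real.rpow_logb (by norm_num) (by norm_num) hN0
  have hpow : ((2:ℝ) ^ (k + 1 : ℕ)) = (N : ℝ) * (2:ℝ) ^ v := by
    have h1 : ((2:ℝ) ^ (k + 1 : ℕ)) = (2:ℝ) ^ ((k : ℝ) + 1) := by
      rw [← Real.rpow_natCast]
      push_cast
      ring_nf
    rw [h1, show (k : ℝ) + 1 = L + v by simp [hv], Real.rpow_add (by norm_num), hNL]
  have hkey : ((2:ℝ) ^ (k + 1 : ℕ)) ≤ (N : ℝ) * (1 + v) := by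
    rw [hpow]
    exact mul_le_mul_of_nonneg_left h2v hN0.le
  have hSR : (k : ℝ) * ((N : ℝ) + 1) - ((2:ℝ) ^ (k + 1 : ℕ) - 2)
      ≤ ∑ x : α, ((f x).length : ℝ) := by
    exact_mod_cast hS
  have hkpos : (0:ℝ) ≤ (k : ℝ) := Nat.cast_nonneg k
  have hexp : (N : ℝ) * (1 + v) = (N : ℝ) * ((k : ℝ) + 2 - L) := by
    simp only [hv]; ring
  rw [hexp] at hkey
  nlinarith [hSR, hkey, hkpos]
end
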